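/- For every imputation g : ℝ → ℝ and every a ∈ [0,1], the classifier h_a(x₁, x₂) = 𝟙[x₁ ≥ a] from H₁ satisfies: either Disc(h_a) = 1 or L(h_a) = 1. In particular, for any ε < 1/2 and δ < 1/2, no classifier in H₁ simultaneously satisfies L(h) ≤ δ and Disc(h) ≤ ε, regardless of the choice of imputation g. -/
import Mathlib


/- Two-point dataset with all second features missing: group 0 has observed
first feature 0 and label 1; group 1 has observed first feature 1 and label 0.
An imputation g : ℝ → ℝ produces imputed feature vectors v₀ = (0, g 0) and
v₁ = (1, g 1). -/

/-- Group-0 risk (0–1 loss) of a classifier h on the imputed data. -/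
noncomputable def riskG0 (g : ℝ → ℝ) (h : ℝ × ℝ → ℝ) : ℝ :=
  if h (0, g 0) ≠ 1 then 1 else 0

/-- Group-1 risk (0–1 loss) of a classifier h on the imputed data. -/
noncomputable def riskG1 (g : ℝ → ℝ) (h : ℝ × ℝ → ℝ) : ℝ :=
  if h (1, g 1) ≠ 0 then 1 else 0

/-- Overall risk: the two groups are equally likely. -/
noncomputable def risk (g : ℝ → ℝ) (h : ℝ × ℝ → ℝ) : ℝ :=
  (riskG0 g h + riskG1 g h) / 2

/-- Discrimination risk Disc(h) = |L₀(h) − L₁(h)|. -/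
noncomputable def disc (g : ℝ → ℝ) (h : ℝ × ℝ → ℝ) : ℝ :=
  |riskG0 g h - riskG1 g h|

/-- The classifier h_a(x₁, x₂) = 𝟙[x₁ ≥ a] from the hypothesis class H₁. -/
noncomputable def hClass1 (a : ℝ) : ℝ × ℝ → ℝ :=
  fun x => if x.1 ≥ a then 1 else 0

/-- For every imputation g and every a ∈ [0,1], the classifier h_a ∈ H₁ has
either Disc(h_a) = 1 or L(h_a) = 1; hence for ε, δ < 1/2 no classifier in H₁
satisfies both L(h) ≤ δ and Disc(h) ≤ ε, regardless of the imputation. -/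
theorem no_fair_accurate_classifier_in_H1 :
    (∀ (g : ℝ → ℝ), ∀ a ∈ Set.Icc (0:ℝ) 1,
      disc g (hClass1 a) = 1 ∨ risk g (hClass1 a) = 1) ∧
    (∀ ε δ : ℝ, ε < 1/2 → δ < 1/2 → ∀ (g : ℝ → ℝ), ∀ a ∈ Set.Icc (0:ℝ) 1,
      ¬ (risk g (hClass1 a) ≤ δ ∧ disc g (hClass1 a) ≤ ε)) := by
  have key : ∀ (g : ℝ → ℝ), ∀ a ∈ Set.Icc (0:ℝ) 1,
      disc g (hClass1 a) = 1 ∨ risk g (hClass1 a) = 1 := by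
    intro g a ha
    have h1 : riskG1 g (hClass1 a) = 1 := by
      simp [riskG1, hClass1, ha.2]
    by_cases h0 : a ≤ 0
    · left
      have : riskG0 g (hClass1 a) = 0 := by simp [riskG0, hClass1, h0]
      rw [disc, this, h1]; norm_num
    · right
      have : riskG0 g (hClass1 a) = 1 := by
        simp [riskG0, hClass1]
        linarith
      rw [risk, this, h1]; norm_num
  refine ⟨key, ?_⟩
  intro ε δ hε hδ g a ha hcon
  rcases key g a ha with h | h
  · rw [h] at hcon; linarith [hcon.2]
  · rw [h] at hcon; linarith [hcon.1]
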